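/- Every finite collection S of two-bar charts (a_i, b_i) with a_i, b_i ∈ (0,1] admits a partition into groups such that: (i) for every group, the componentwise sum (Σ a_i over the group, Σ b_i over the group) has both components at most 1; and (ii) at most one group has both componentwise sums at most 1/2 (i.e., for every other group, the maximum of its two componentwise sums is strictly greater than 1/2). -/
import Mathlib


/-!
A two-bar chart (2-BC) `i` is a pair `(a i, b i)` with `a i, b i ∈ (0,1]`.
A packing `p` places the bar of height `a i` in cell `p i` and the bar of
height `b i` in cell `p i + 1` (cells are `1, 2, …`).
-/

/-- Validity of the data: all bar heights lie in `(0,1]`. -/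
def ValidBC {n : ℕ} (a b : Fin n → ℝ) : Prop :=
  ∀ i, a i ∈ Set.Ioc (0 : ℝ) 1 ∧ b i ∈ Set.Ioc (0 : ℝ) 1

/-- Total height of the bars lying in cell `c` under packing `p`. -/
def cellLoad {n : ℕ} (a b : Fin n → ℝ) (p : Fin n → ℕ) (c : ℕ) : ℝ :=
  (∑ i, if p i = c then a i else 0) + ∑ i, if p i + 1 = c then b i else 0

/-- A packing is feasible if cells start at 1 and every cell carries total height at most 1. -/
def Feasible {n : ℕ} (a b : Fin n → ℝ) (p : Fin n → ℕ) : Prop :=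
  (∀ i, 1 ≤ p i) ∧ ∀ c, cellLoad a b p c ≤ 1

/-- The (finite) set of cells containing at least one bar. -/
def occupied {n : ℕ} (p : Fin n → ℕ) : Finset ℕ :=
  Finset.univ.biUnion fun i => {p i, p i + 1}

/-- The length of a packing: the number of cells containing at least one bar. -/
def packLen {n : ℕ} (p : Fin n → ℕ) : ℕ :=
  (occupied p).card

/-- The minimum length of a feasible packing. -/
noncomputable def OPT {n : ℕ} (a b : Fin n → ℝ) : ℕ :=
  sInf {m | ∃ p, Feasible a b p ∧ packLen p = m}

private lemma sum_comp_fiber {n m k : ℕ} (f : Fin m → Fin k) (g : Fin n → Fin m)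
    (v : Fin n → ℝ) (y : Fin k) :
    (∑ i ∈ Finset.univ.filter fun i => f (g i) = y, v i)
      = ∑ x ∈ Finset.univ.filter (fun x => f x = y) , ∑ i ∈ Finset.univ.filter fun i => g i = x, v i := by
  rw [Finset.sum_fiberwise_eq_sum_filter]
  congr 1
  ext i
  simp

/-- every finite collection of 2-BCs can be partitioned into (nonempty)
groups so that each group has both componentwise sums at most 1, and at most one group
has both componentwise sums at most `1/2`. -/
theorem exists_combining_partition {n : ℕ} (a b : Fin n → ℝ) (hval : ValidBC a b) :
    ∃ (m : ℕ) (g : Fin n → Fin m), Function.Surjective g ∧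
      (∀ t : Fin m,
        (∑ i ∈ Finset.univ.filter fun i => g i = t, a i) ≤ 1 ∧
        (∑ i ∈ Finset.univ.filter fun i => g i = t, b i) ≤ 1) ∧
      (∀ t s : Fin m,
        ((∑ i ∈ Finset.univ.filter fun i => g i = t, a i) ≤ 1 / 2 ∧
         (∑ i ∈ Finset.univ.filter fun i => g i = t, b i) ≤ 1 / 2) →
        ((∑ i ∈ Finset.univ.filter fun i => g i = s, a i) ≤ 1 / 2 ∧
         (∑ i ∈ Finset.univ.filter fun i => g i = s, b i) ≤ 1 / 2) → t = s) := by
  have key : ∀ m (g : Fin n → Fin m), Function.Surjective g →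
      (∀ t : Fin m,
        (∑ i ∈ Finset.univ.filter fun i => g i = t, a i) ≤ 1 ∧
        (∑ i ∈ Finset.univ.filter fun i => g i = t, b i) ≤ 1) →
      ∃ (m' : ℕ) (g' : Fin n → Fin m'), Function.Surjective g' ∧
      (∀ t : Fin m',
        (∑ i ∈ Finset.univ.filter fun i => g' i = t, a i) ≤ 1 ∧
        (∑ i ∈ Finset.univ.filter fun i => g' i = t, b i) ≤ 1) ∧
      (∀ t s : Fin m',
        ((∑ i ∈ Finset.univ.filter fun i => g' i = t, a i) ≤ 1 / 2 ∧
         (∑ i ∈ Finset.univ.filter fun i => g' i = t, b i) ≤ 1 / 2) →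
        ((∑ i ∈ Finset.univ.filter fun i => g' i = s, a i) ≤ 1 / 2 ∧
         (∑ i ∈ Finset.univ.filter fun i => g' i = s, b i) ≤ 1 / 2) → t = s) := by
    intro m
    induction m using Nat.strong_induction_on with
    | _ m ih =>
      intro g hg hsum
      by_cases hsmall : ∀ t s : Fin m,
          ((∑ i ∈ Finset.univ.filter fun i => g i = t, a i) ≤ 1 / 2 ∧
           (∑ i ∈ Finset.univ.filter fun i => g i = t, b i) ≤ 1 / 2) →
          ((∑ i ∈ Finset.univ.filter fun i => g i = s, a i) ≤ 1 / 2 ∧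
           (∑ i ∈ Finset.univ.filter fun i => g i = s, b i) ≤ 1 / 2) → t = s
      · exact ⟨m, g, hg, hsum, hsmall⟩
      · push_neg at hsmall
        obtain ⟨t, s, ht, hs, hts⟩ := hsmall
        obtain ⟨m', rfl⟩ : ∃ m', m = m' + 1 :=
          Nat.exists_eq_succ_of_ne_zero (by rintro rfl; exact t.elim0)
        set e := finSuccEquiv' t with he
        have het : e t = none := finSuccEquiv'_at t
        have hes : e s ≠ none := by
          intro h
          exact hts (e.injective (h.trans het.symm)).symm
        obtain ⟨s', hs'⟩ : ∃ s', e s = some s' := Option.ne_none_iff_exists'.mp hes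
        set f : Fin (m' + 1) → Fin m' := fun x => (e x).getD s' with hf
        have hft : f t = s' := by simp [hf, het]
        have hfs : f s = s' := by simp [hf, hs']
        have hfx : ∀ x, x ≠ t → e x = some (f x) := by
          intro x hx
          cases h : e x with
          | none => exact absurd (e.injective (h.trans het.symm)) hx
          | some y => simp [hf, h]
        have hfsurj : Function.Surjective f := by
          intro y
          refine ⟨e.symm (some y), ?_⟩
          simp [hf]
        have fib1 : ∀ y : Fin m', y ≠ s' →
            Finset.univ.filter (fun x => f x = y) = {e.symm (some y)} := by
          intro y hy
          ext x
          simp only [Finset.mem_filter, Finset.mem_univ, true_and, Finset.mem_singleton]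
          constructor
          · intro hxy
            have hxt : x ≠ t := by
              rintro rfl
              exact hy (hxy.symm.trans hft)
            have := hfx x hxt
            rw [hxy] at this
            exact e.eq_symm_apply.mpr this
          · rintro rfl
            have h1 : e (e.symm (some y)) = some y := e.apply_symm_apply _
            simp [hf, h1]
        have fib2 : Finset.univ.filter (fun x => f x = s') = {t, s} := by
          ext x
          simp only [Finset.mem_filter, Finset.mem_univ, true_and, Finset.mem_insert,
            Finset.mem_singleton]
          constructor
          · intro hxy
            by_contra hx
            push_neg at hx
            have h1 := hfx x hx.1
            rw [hxy] at h1
            exact hx.2 (e.injective (h1.trans hs'.symm))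
          · rintro (rfl | rfl)
            · exact hft
            · exact hfs
        refine ih m' (by omega) (f ∘ g) (hfsurj.comp hg) ?_
        intro y
        have hsa := sum_comp_fiber f g a y
        have hsb := sum_comp_fiber f g b y
        simp only [Function.comp_apply]
        by_cases hy : y = s'
        · subst hy
          rw [hsa, hsb, fib2, Finset.sum_pair hts, Finset.sum_pair hts]
          constructor
          · linarith [ht.1, hs.1]
          · linarith [ht.2, hs.2]
        · rw [hsa, hsb, fib1 y hy, Finset.sum_singleton, Finset.sum_singleton]
          exact hsum _
  obtain ⟨m', g', h1, h2, h3⟩ := key n id Function.surjective_id (by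
    intro t
    have hfil : Finset.univ.filter (fun i => id i = t) = {t} := by
      ext i; simp
    rw [hfil, Finset.sum_singleton, Finset.sum_singleton]
    exact ⟨(hval t).1.2, (hval t).2.2⟩)
  exact ⟨m', g', h1, h2, h3⟩
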